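/- Let A be a parity check matrix of the Hamming code of length n_a = (q^{u m_a}−1)/(q^u−1) over F_{q^u}, and B a parity check matrix of the Hamming code of length n_b = (q^{m_b}−1)/(q−1) over F_q. Then the code over F_{q^u} with parity check matrix A ⊗ B has covering radius min{u m_a, m_b}. -/

import Mathlib

open Matrix Kronecker

/-- H is a parity check matrix of a Hamming code: its columns are nonzero, pairwise
non-proportional, and represent all 1-dimensional subspaces of F^m. -/
def IsHammingPCM {F : Type*} [Field F] {m n : ℕ} (H : Matrix (Fin m) (Fin n) F) : Prop :=
  (∀ j, (fun i => H i j) ≠ (0 : Fin m → F)) ∧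
  (∀ j j' : Fin n, j ≠ j' → ∀ c : F, (fun i => H i j) ≠ c • (fun i => H i j')) ∧
  (∀ x : Fin m → F, x ≠ 0 → ∃ (j : Fin n) (c : F), x = c • (fun i => H i j))

/-!
Write a word as a matrix `X`, so that its syndrome is `Y = B X Aᵀ`. Every vector is a multiple of
a column of a Hamming parity check matrix, so a rank-one syndrome `w vᵀ` with `w` defined over
`F_q` has a preimage of weight one. Splitting `Y` into its `m_b` rows, or into the `u m_a` rank-one
terms obtained by expanding its entries in an `F_q`-basis of `F_{q^u}`, yields a preimage of weight
at most `min (u m_a) m_b`, which bounds the covering radius. Conversely, the rows of `B X Aᵀ` lie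
in the `F_q`-span of the vectors `X l j • A_j` with `X l j ≠ 0`, so a syndrome whose rows span an
`F_q`-space of dimension `min (u m_a) m_b` in `F_{q^u}^{m_a} ≅ F_q^{u m_a}` needs that much weight.
-/

open Module Submodule Set

section HammingNorm

variable {ι κ R : Type*} [Fintype ι] [DecidableEq R]

theorem hammingNorm_sum_le [AddCommMonoid R] (s : Finset κ) (f : κ → ι → R) :
    hammingNorm (∑ k ∈ s, f k) ≤ ∑ k ∈ s, hammingNorm (f k) := by
  classical
  refine (Finset.card_le_card fun i hi => ?_).trans Finset.card_biUnion_le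
  simp only [Finset.mem_filter, Finset.mem_univ, true_and, Finset.sum_apply] at hi
  obtain ⟨k, hk, hki⟩ := Finset.exists_ne_zero_of_sum_ne_zero hi
  exact Finset.mem_biUnion.2 ⟨k, hk, by simpa using hki⟩

theorem hammingNorm_single_le_one [DecidableEq ι] [Zero R] (j : ι) (c : R) :
    hammingNorm (Pi.single j c : ι → R) ≤ 1 := by
  have hsupp : ∀ i, (Pi.single j c : ι → R) i ≠ 0 → i = j := fun i hi =>
    by_contra fun hij => hi (Pi.single_eq_of_ne hij _)
  refine Finset.card_le_one.2 fun a ha b hb => ?_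
  simp only [Finset.mem_filter, Finset.mem_univ, true_and] at ha hb
  rw [hsupp a ha, hsupp b hb]

theorem Matrix.hammingNorm_vec_vecMulVec_le {m n : Type*} [Fintype m] [Fintype n] [MulZeroClass R]
    (w : m → R) (v : n → R) :
    hammingNorm (vec (vecMulVec w v)) ≤ hammingNorm v * hammingNorm w := by
  refine (Finset.card_le_card fun p hp => ?_).trans (Finset.card_product _ _).le
  have hwv : w p.2 * v p.1 ≠ 0 := (Finset.mem_filter.1 hp).2
  exact Finset.mem_product.2 ⟨Finset.mem_filter.2 ⟨Finset.mem_univ _, right_ne_zero_of_mul hwv⟩,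
    Finset.mem_filter.2 ⟨Finset.mem_univ _, left_ne_zero_of_mul hwv⟩⟩

end HammingNorm

namespace Matrix

variable {ι R : Type*} {l m n p : Type*} [Fintype m] [Fintype n]

theorem exists_mulVec_eq_zero_hammingDist_le [Ring R] [DecidableEq R] {M : Matrix l n R} {r : ℕ}
    (h : ∀ x, ∃ e, M *ᵥ e = M *ᵥ x ∧ hammingNorm e ≤ r) (x : n → R) :
    ∃ c, M *ᵥ c = 0 ∧ hammingDist x c ≤ r := by
  obtain ⟨e, he, her⟩ := h x
  refine ⟨x - e, by rw [mulVec_sub, he, sub_self], ?_⟩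
  rwa [hammingDist_comm, hammingDist_eq_hammingNorm, neg_sub, sub_add_cancel]

theorem kronecker_mulVec_vec_vecMulVec [CommRing R] (A : Matrix l m R) (B : Matrix p n R)
    (y : n → R) (x : m → R) :
    (A ⊗ₖ B) *ᵥ vec (vecMulVec y x) = vec (vecMulVec (B *ᵥ y) (A *ᵥ x)) := by
  rw [kronecker_mulVec_vec, mul_vecMulVec, vecMulVec_mul, vecMul_transpose]

theorem exists_kronecker_mulVec_eq_vec_sum_vecMulVec [Fintype ι] [CommRing R] [DecidableEq R]
    {A : Matrix l m R} {B : Matrix p n R} (w : ι → p → R) (v : ι → l → R)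
    (hw : ∀ i, ∃ y, B *ᵥ y = w i ∧ hammingNorm y ≤ 1)
    (hv : ∀ i, ∃ x, A *ᵥ x = v i ∧ hammingNorm x ≤ 1) :
    ∃ e, (A ⊗ₖ B) *ᵥ e = vec (∑ i, vecMulVec (w i) (v i)) ∧ hammingNorm e ≤ Fintype.card ι := by
  choose y hy hy1 using hw
  choose x hx hx1 using hv
  refine ⟨vec (∑ i, vecMulVec (y i) (x i)), ?_, ?_⟩
  · simp only [vec_sum, mulVec_sum, kronecker_mulVec_vec_vecMulVec, hy, hx]
  calc hammingNorm (vec (∑ i, vecMulVec (y i) (x i)))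
      ≤ ∑ i, hammingNorm (vec (vecMulVec (y i) (x i))) := by
        rw [vec_sum]; exact hammingNorm_sum_le _ _
    _ ≤ ∑ _i : ι, 1 := Finset.sum_le_sum fun i _ =>
        (hammingNorm_vec_vecMulVec_le _ _).trans (Left.mul_le_one (hx1 i) (hy1 i))
    _ = Fintype.card ι := by simp

theorem sum_vecMulVec_single_row [Fintype p] [DecidableEq p] [Semiring R] (Y : Matrix p l R) :
    ∑ k, vecMulVec (Pi.single k 1) (Y k) = Y := by
  ext k i
  simp [Matrix.sum_apply, vecMulVec_apply, Pi.single_apply]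

theorem sum_vecMulVec_basis_repr {K L : Type*} [Field K] [Field L] [Algebra K L] [Fintype ι]
    [Fintype l] [DecidableEq l] (b : Basis ι K L) (Y : Matrix p l L) :
    ∑ it : l × ι, vecMulVec (fun k => algebraMap K L (b.repr (Y k it.1) it.2))
      (Pi.single it.1 (b it.2)) = Y := by
  ext k i
  simp [Matrix.sum_apply, Fintype.sum_prod_type, vecMulVec_apply, Pi.single_apply,
    ← Algebra.smul_def, b.sum_repr]

end Matrix

theorem exists_le_finrank_span_range {K V : Type*} [DivisionRing K] [AddCommGroup V] [Module K V]
    [FiniteDimensional K V] {r n : ℕ} (hrn : r ≤ n) (hrV : r ≤ finrank K V) :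
    ∃ v : Fin n → V, r ≤ finrank K (span K (range v)) := by
  let b := Module.finBasis K V
  let v : Fin n → V := fun k => if h : (k : ℕ) < r then b (Fin.castLE hrV ⟨k, h⟩) else 0
  refine ⟨v, ?_⟩
  have hli : LinearIndependent K (b ∘ Fin.castLE hrV) :=
    b.linearIndependent.comp _ (Fin.castLE_injective hrV)
  calc r = finrank K (span K (range (b ∘ Fin.castLE hrV))) := by
        rw [finrank_span_eq_card hli, Fintype.card_fin]
    _ ≤ finrank K (span K (range v)) := Submodule.finrank_mono <| span_mono <|
        range_subset_iff.2 fun k => ⟨Fin.castLE hrn k, by simp [v]; rfl⟩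

theorem Module.finrank_eq_of_card_eq_pow {K V : Type*} [Field K] [Fintype K] [AddCommGroup V]
    [Module K V] [Fintype V] {u : ℕ} (h : Fintype.card V = Fintype.card K ^ u) :
    finrank K V = u :=
  Nat.pow_right_injective Fintype.one_lt_card (card_eq_pow_finrank.symm.trans h)

namespace Matrix

variable {K L : Type*} [Field K] [Field L] [Algebra K L] [DecidableEq L]

theorem finrank_span_range_le_hammingNorm {l m n p : Type*} [Fintype m] [Fintype n]
    (A : Matrix l m L) (B : Matrix p n K) (e : m × n → L) (Y : Matrix p l L)
    (hY : (A ⊗ₖ B.map (algebraMap K L)) *ᵥ e = vec Y) :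
    finrank K (span K (range Y)) ≤ hammingNorm e := by
  classical
  obtain ⟨X, rfl⟩ := vec_bijective.surjective e
  rw [kronecker_mulVec_vec, vec_inj] at hY
  subst hY
  set supp := Finset.univ.filter fun p : m × n => vec X p ≠ 0
  let w : m × n → l → L := fun p => X p.2 p.1 • Aᵀ p.1
  have hw : ∀ p, w p ∈ span K (supp.image w : Set (l → L)) := by
    intro p
    by_cases hp : vec X p = 0
    · simp [w, show X p.2 p.1 = 0 from hp]
    · exact subset_span <| Finset.mem_coe.2 <|
        Finset.mem_image_of_mem w (Finset.mem_filter.2 ⟨Finset.mem_univ _, hp⟩)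
  have hrow : ∀ k, (B.map (algebraMap K L) * X * Aᵀ) k = ∑ p, B k p.2 • w p := by
    intro k
    ext i
    simp [w, mul_apply, Finset.sum_apply, Fintype.sum_prod_type, Algebra.smul_def, Finset.sum_mul,
      mul_assoc]
  calc finrank K (span K (range (B.map (algebraMap K L) * X * Aᵀ)))
      ≤ finrank K (span K (supp.image w : Set (l → L))) := Submodule.finrank_mono <| span_le.2 <|
        range_subset_iff.2 fun k => hrow k ▸ sum_mem fun p _ => smul_mem _ _ (hw p)
    _ ≤ (supp.image w).card := finrank_span_finset_le_card _
    _ ≤ hammingNorm (vec X) := Finset.card_image_le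

end Matrix

namespace IsHammingPCM

variable {m n : ℕ}

theorem exists_mulVec_eq {F : Type*} [Field F] [DecidableEq F] {H : Matrix (Fin m) (Fin n) F}
    (hH : IsHammingPCM H) (v : Fin m → F) : ∃ e, H *ᵥ e = v ∧ hammingNorm e ≤ 1 := by
  rcases eq_or_ne v 0 with rfl | hv
  · exact ⟨0, mulVec_zero H, by simp⟩
  obtain ⟨j, c, rfl⟩ := hH.2.2 v hv
  refine ⟨Pi.single j c, ?_, hammingNorm_single_le_one j c⟩
  ext i
  simp [mulVec_single, mul_comm]

theorem exists_map_mulVec_eq {K L : Type*} [Field K] [Field L] [Algebra K L] [DecidableEq L]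
    {H : Matrix (Fin m) (Fin n) K} (hH : IsHammingPCM H) (v : Fin m → K) :
    ∃ e : Fin n → L, H.map (algebraMap K L) *ᵥ e = algebraMap K L ∘ v ∧ hammingNorm e ≤ 1 := by
  classical
  obtain ⟨e, he, he1⟩ := hH.exists_mulVec_eq v
  refine ⟨algebraMap K L ∘ e, ?_, ?_⟩
  · ext i
    rw [← RingHom.map_mulVec, he, Function.comp_apply]
  · exact (hammingNorm_comp (fun _ => algebraMap K L) (fun _ => (algebraMap K L).injective)
      (fun _ => map_zero _)).trans_le he1

theorem exists_kronecker_mulVec_eq {K L : Type*} [Field K] [Field L] [Algebra K L]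
    [FiniteDimensional K L] [DecidableEq L] {ma na mb nb : ℕ} {A : Matrix (Fin ma) (Fin na) L}
    {B : Matrix (Fin mb) (Fin nb) K} (hA : IsHammingPCM A) (hB : IsHammingPCM B)
    (S : Fin ma × Fin mb → L) :
    ∃ e, (A ⊗ₖ B.map (algebraMap K L)) *ᵥ e = S ∧ hammingNorm e ≤ min (finrank K L * ma) mb := by
  obtain ⟨Y, rfl⟩ := vec_bijective.surjective S
  have hbasis : ∃ e, (A ⊗ₖ B.map (algebraMap K L)) *ᵥ e = vec Y ∧
      hammingNorm e ≤ finrank K L * ma := by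
    let b := Module.finBasis K L
    obtain ⟨e, he, hwt⟩ := exists_kronecker_mulVec_eq_vec_sum_vecMulVec
      (fun (it : Fin ma × Fin (finrank K L)) => algebraMap K L ∘ fun k => b.repr (Y k it.1) it.2)
      (fun it => Pi.single it.1 (b it.2))
      (fun _ => hB.exists_map_mulVec_eq _) (fun _ => hA.exists_mulVec_eq _)
    exact ⟨e, he.trans (congrArg vec (sum_vecMulVec_basis_repr b Y)),
      hwt.trans_eq (by simp [mul_comm])⟩
  have hrows : ∃ e, (A ⊗ₖ B.map (algebraMap K L)) *ᵥ e = vec Y ∧ hammingNorm e ≤ mb := by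
    have := exists_kronecker_mulVec_eq_vec_sum_vecMulVec (A := A) (B := B.map (algebraMap K L))
      (fun k => Pi.single k 1) Y
      (fun k => by
        obtain ⟨y, hy, hy1⟩ := hB.exists_map_mulVec_eq (L := L) (Pi.single k 1)
        exact ⟨y, hy.trans (by ext; simp [Pi.single_apply, apply_ite]), hy1⟩)
      (fun _ => hA.exists_mulVec_eq _)
    rwa [sum_vecMulVec_single_row, Fintype.card_fin] at this
  rcases min_choice (finrank K L * ma) mb with h | h <;> rw [h] <;> assumption

end IsHammingPCM

theorem kronecker_hamming_covering_radius_general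
    {q u ma na mb nb : ℕ} (K L : Type) [Field K] [Fintype K]
    [Field L] [Fintype L] [DecidableEq L] [Algebra K L]
    (hq : Fintype.card K = q) (hL : Fintype.card L = q ^ u)
    (A : Matrix (Fin ma) (Fin na) L) (hA : IsHammingPCM A)
    (B : Matrix (Fin mb) (Fin nb) K) (hB : IsHammingPCM B) :
    (∀ x : Fin na × Fin nb → L, ∃ c : Fin na × Fin nb → L,
        (A ⊗ₖ B.map (algebraMap K L)).mulVec c = 0 ∧
          hammingDist x c ≤ min (u * ma) mb) ∧
      (∃ x : Fin na × Fin nb → L, ∀ c : Fin na × Fin nb → L,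
        (A ⊗ₖ B.map (algebraMap K L)).mulVec c = 0 →
          min (u * ma) mb ≤ hammingDist x c) := by
  have : FiniteDimensional K L := .of_finite
  have hu : finrank K L = u := finrank_eq_of_card_eq_pow (by rw [hL, hq])
  have hdecode := hu ▸ hA.exists_kronecker_mulVec_eq hB
  refine ⟨exists_mulVec_eq_zero_hammingDist_le fun x => hdecode _, ?_⟩
  obtain ⟨Y, hY⟩ := exists_le_finrank_span_range (K := K) (V := Fin ma → L)
    (min_le_right (u * ma) mb) (by simp [finrank_pi_fintype, hu, mul_comm])
  obtain ⟨x, hx, -⟩ := hdecode (vec Y)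
  refine ⟨x, fun c hc => hY.trans ?_⟩
  rw [hammingDist_comm, hammingDist_eq_hammingNorm]
  exact finrank_span_range_le_hammingNorm A B _ Y (by rw [mulVec_add, mulVec_neg, hc, hx]; simp)

/-- The code over F_{q^u} with parity check matrix A ⊗ B, where A is a
Hamming PCM over F_{q^u} and B a Hamming PCM over F_q, has covering radius
min{u·m_a, m_b}. -/
theorem kronecker_hamming_covering_radius
    {q u ma na mb nb : ℕ} (K L : Type) [Field K] [Fintype K] [DecidableEq K]
    [Field L] [Fintype L] [DecidableEq L] [Algebra K L]
    (hq : Fintype.card K = q) (hL : Fintype.card L = q ^ u)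
    (hu : 1 ≤ u) (hma : 2 ≤ ma) (hmb : 2 ≤ mb)
    (A : Matrix (Fin ma) (Fin na) L) (hA : IsHammingPCM A)
    (B : Matrix (Fin mb) (Fin nb) K) (hB : IsHammingPCM B) :
    (∀ x : Fin na × Fin nb → L, ∃ c : Fin na × Fin nb → L,
        (A ⊗ₖ B.map (algebraMap K L)).mulVec c = 0 ∧
          hammingDist x c ≤ min (u * ma) mb) ∧
      (∃ x : Fin na × Fin nb → L, ∀ c : Fin na × Fin nb → L,
        (A ⊗ₖ B.map (algebraMap K L)).mulVec c = 0 →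
          min (u * ma) mb ≤ hammingDist x c) :=
  kronecker_hamming_covering_radius_general K L hq hL A hA B hB
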